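/- With c₁ = (n/τ)² λ_max(((τ−1)/(n−1))M + ((n−τ)/(n−1))Diag(M)) and c₂ = λ_max(M + ((n−τ)/τ)Diag(M)), for M symmetric PSD with positive diagonal and 2 ≤ τ ≤ n, it holds that c₂ ≤ ((n−1)τ/(n(τ−1))) c₁ ≤ 2 c₁. -/

import Mathlib

/-!
Both constants are top eigenvalues of nonnegative combinations of `M` and `D = Diag(M)`, both
positive semidefinite. Comparing coefficients gives, in the Loewner order,
`M + ((n-τ)/τ) D ≤ (n(n-1)/(τ(τ-1))) (((τ-1)/(n-1)) M + ((n-τ)/(n-1)) D)`,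
and `λ_max` is monotone and positively homogeneous for this order because `B ≤ λ_max(B) • 1`
for Hermitian `B`. Finally `n(n-1)/(τ(τ-1)) = ((n-1)τ/(n(τ-1))) (n/τ)²`, and
`(n-1)τ ≤ 2n(τ-1)` as soon as `τ ≥ 2`.
-/

/-- The largest eigenvalue of a real matrix, as the supremum of its eigenvalue set. -/
noncomputable def lamMax {n : ℕ} (M : Matrix (Fin n) (Fin n) ℝ) : ℝ :=
  sSup {r : ℝ | ∃ v : Fin n → ℝ, v ≠ 0 ∧ M.mulVec v = r • v}

open Matrix
open scoped MatrixOrder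

namespace Matrix

variable {ι : Type*}

theorem smul_add_smul_le_smul_add_smul {A B : Matrix ι ι ℝ} (hA : A.PosSemidef)
    (hB : B.PosSemidef) {a a' b b' : ℝ} (ha : a ≤ a') (hb : b ≤ b') :
    a • A + b • B ≤ a' • A + b' • B := by
  rw [le_iff, add_sub_add_comm, ← sub_smul, ← sub_smul]
  exact (hA.smul (sub_nonneg.mpr ha)).add (hB.smul (sub_nonneg.mpr hb))

theorem independentSampling_le_smul_niceSampling {M D : Matrix ι ι ℝ} (hM : M.PosSemidef)
    (hD : D.PosSemidef) {n τ : ℝ} (hτ2 : 2 ≤ τ) (hτn : τ ≤ n) :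
    M + ((n - τ) / τ) • D ≤
      (n * (n - 1) / (τ * (τ - 1))) •
        (((τ - 1) / (n - 1)) • M + ((n - τ) / (n - 1)) • D) := by
  have hτ1 : 0 < τ - 1 := by linarith
  have hn1 : 0 < n - 1 := by linarith
  have hM_coeff : n * (n - 1) / (τ * (τ - 1)) * ((τ - 1) / (n - 1)) = n / τ := by
    field_simp
  have hD_coeff :
      n * (n - 1) / (τ * (τ - 1)) * ((n - τ) / (n - 1)) = n / (τ - 1) * ((n - τ) / τ) := by
    field_simp
  rw [smul_add, smul_smul, smul_smul, hM_coeff, hD_coeff]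
  nth_rw 1 [← one_smul ℝ M]
  refine smul_add_smul_le_smul_add_smul hM hD ((one_le_div (by linarith)).mpr hτn) ?_
  exact le_mul_of_one_le_left (div_nonneg (by linarith) (by linarith))
    ((one_le_div hτ1).mpr (by linarith))

end Matrix

section lamMax

variable {n : ℕ}

theorem lamMax_eq_sSup_spectrum (B : Matrix (Fin n) (Fin n) ℝ) :
    lamMax B = sSup (spectrum ℝ B) := by
  rw [lamMax, ← spectrum_toLin']
  congr 1
  ext r
  rw [← Module.End.hasEigenvalue_iff_mem_spectrum, Module.End.hasEigenvalue_iff,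
    Submodule.ne_bot_iff]
  simp [and_comm]

theorem le_lamMax_of_mem_spectrum {B : Matrix (Fin n) (Fin n) ℝ} {r : ℝ}
    (hr : r ∈ spectrum ℝ B) : r ≤ lamMax B :=
  lamMax_eq_sSup_spectrum B ▸ le_csSup (finite_spectrum B).bddAbove hr

theorem lamMax_nonneg {B : Matrix (Fin n) (Fin n) ℝ} (hB : B.PosSemidef) : 0 ≤ lamMax B :=
  lamMax_eq_sSup_spectrum B ▸ Real.sSup_nonneg fun _ hr => spectrum_nonneg_of_nonneg hB.nonneg hr

theorem le_algebraMap_lamMax {B : Matrix (Fin n) (Fin n) ℝ} (hB : B.IsHermitian) :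
    B ≤ algebraMap ℝ _ (lamMax B) :=
  le_algebraMap_of_spectrum_le (fun _ => le_lamMax_of_mem_spectrum) hB

theorem lamMax_le_of_le_algebraMap {B : Matrix (Fin n) (Fin n) ℝ} (hB : B.IsHermitian) {c : ℝ}
    (hc : 0 ≤ c) (h : B ≤ algebraMap ℝ _ c) : lamMax B ≤ c :=
  lamMax_eq_sSup_spectrum B ▸ Real.sSup_le ((le_algebraMap_iff_spectrum_le hB).mp h) hc

theorem lamMax_le_mul_lamMax_of_le_smul {X A : Matrix (Fin n) (Fin n) ℝ} (hA : A.PosSemidef)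
    {s : ℝ} (hs : 0 ≤ s) (h : X ≤ s • A) : lamMax X ≤ s * lamMax A := by
  have hX : X.IsHermitian := by
    simpa using (hA.isHermitian.smul (IsSelfAdjoint.all s)).sub (le_iff.mp h).isHermitian
  refine lamMax_le_of_le_algebraMap hX (mul_nonneg hs (lamMax_nonneg hA)) (h.trans ?_)
  rw [Algebra.algebraMap_eq_smul_one, ← smul_smul, ← Algebra.algebraMap_eq_smul_one]
  exact smul_le_smul_of_nonneg_left (le_algebraMap_lamMax hA.isHermitian) hs

end lamMax

theorem c2_le_c1_general
    (n : ℕ)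
    (M : Matrix (Fin n) (Fin n) ℝ) (hM : M.PosSemidef)
    (τ : ℝ) (hτ2 : 2 ≤ τ) (hτn : τ ≤ n) :
    let c₁ : ℝ := ((n : ℝ) / τ) ^ 2 *
      lamMax ((((τ : ℝ) - 1) / ((n : ℝ) - 1)) • M +
        (((n : ℝ) - τ) / ((n : ℝ) - 1)) • Matrix.diagonal (fun i => M i i))
    let c₂ : ℝ := lamMax (M + (((n : ℝ) - τ) / τ) • Matrix.diagonal (fun i => M i i))
    c₂ ≤ (((n : ℝ) - 1) * τ / ((n : ℝ) * (τ - 1))) * c₁ ∧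
    (((n : ℝ) - 1) * τ / ((n : ℝ) * (τ - 1))) * c₁ ≤ 2 * c₁ := by
  intro c₁ c₂
  have hτ1 : 0 < τ - 1 := by linarith
  have hn1 : 0 < (n : ℝ) - 1 := by linarith
  set D := diagonal fun i => M i i
  have hD : D.PosSemidef := PosSemidef.diagonal fun _ => hM.diag_nonneg
  set A := ((τ - 1) / ((n : ℝ) - 1)) • M + (((n : ℝ) - τ) / ((n : ℝ) - 1)) • D
  have hA : A.PosSemidef :=
    (hM.smul (div_nonneg hτ1.le hn1.le)).add (hD.smul (div_nonneg (by linarith) hn1.le))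
  set κ := ((n : ℝ) - 1) * τ / ((n : ℝ) * (τ - 1))
  constructor
  · calc c₂ ≤ (n * (n - 1) / (τ * (τ - 1))) * lamMax A :=
          lamMax_le_mul_lamMax_of_le_smul hA (by positivity)
            (independentSampling_le_smul_niceSampling hM hD hτ2 hτn)
      _ = κ * c₁ := by
          simp only [c₁, κ, A, D]
          field_simp
  · have hκ2 : κ ≤ 2 := by
      rw [div_le_iff₀ (mul_pos (by linarith) hτ1)]
      nlinarith
    exact mul_le_mul_of_nonneg_right hκ2 (mul_nonneg (sq_nonneg _) (lamMax_nonneg hA))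

/-- Comparison of the complexity constants
`c₁ = (n/τ)² λ_max(((τ−1)/(n−1))M + ((n−τ)/(n−1))Diag(M))` (τ-nice sampling) and
`c₂ = λ_max(M + ((n−τ)/τ)Diag(M))` (independent uniform sampling):
`c₂ ≤ ((n−1)τ/(n(τ−1))) c₁ ≤ 2 c₁`. -/
theorem c2_le_c1
    (n : ℕ) (hn : 0 < n)
    (M : Matrix (Fin n) (Fin n) ℝ) (hM : M.PosSemidef) (hMdiag : ∀ i, 0 < M i i)
    (τ : ℝ) (hτ2 : 2 ≤ τ) (hτn : τ ≤ n) :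
    let c₁ : ℝ := ((n : ℝ) / τ) ^ 2 *
      lamMax ((((τ : ℝ) - 1) / ((n : ℝ) - 1)) • M +
        (((n : ℝ) - τ) / ((n : ℝ) - 1)) • Matrix.diagonal (fun i => M i i))
    let c₂ : ℝ := lamMax (M + (((n : ℝ) - τ) / τ) • Matrix.diagonal (fun i => M i i))
    c₂ ≤ (((n : ℝ) - 1) * τ / ((n : ℝ) * (τ - 1))) * c₁ ∧
    (((n : ℝ) - 1) * τ / ((n : ℝ) * (τ - 1))) * c₁ ≤ 2 * c₁ :=
  c2_le_c1_general n M hM τ hτ2 hτn
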